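/- arXiv:1001.4829 — 2 statements merged into one kernel-verified Lean document; each statement's English description precedes it below -/
import Mathlib

section
/- Let q be an odd prime power and d an even divisor of q−1. Then for every 2-element subset {u,v} of F_q, the simple graph on vertex set F_q whose edge set is the orbit of {u,v} under the induced action of Γ(q,d) on 2-element subsets of F_q is isomorphic to the generalized Paley graph P(q,d). -/
/-- The generalized Paley graph `P(q,d)` on a finite field `F`: distinct `i, j` are
adjacent iff `(i - j)^d = 1` (a symmetric relation since `d` is even). -/
def PaleyGraph {F : Type} [Field F] (d : ℕ) : SimpleGraph F :=
  SimpleGraph.fromRel (fun i j => (i - j) ^ d = 1)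

/-- The graph on `F` whose edges form the orbit of the pair `{u, v}` under the group
`Γ(q,d)` of affine maps `x ↦ ax + b` with `a` in the unique subgroup of order `d`
of `F^×` (i.e. `a^d = 1`). -/
def OrbitalGraph {F : Type} [Field F] (d : ℕ) (u v : F) : SimpleGraph F :=
  SimpleGraph.fromRel (fun x y => ∃ a b : F, a ^ d = 1 ∧ a * u + b = x ∧ a * v + b = y)

lemma exists_iff_aux {F : Type} [Field F] (d : ℕ) (u v x y : F) (hc : u - v ≠ 0) :
    (∃ a b : F, a ^ d = 1 ∧ a * u + b = x ∧ a * v + b = y) ↔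
      ((x - y) * (u - v)⁻¹) ^ d = 1 := by
  constructor
  · rintro ⟨a, b, ha, hx, hy⟩
    have hxy : x - y = a * (u - v) := by rw [← hx, ← hy]; ring
    rw [hxy, mul_assoc, mul_inv_cancel₀ hc, mul_one]
    exact ha
  · intro h
    refine ⟨(x - y) * (u - v)⁻¹, x - (x - y) * (u - v)⁻¹ * u, h, by ring, ?_⟩
    field_simp
    ring

/-- Each u-orbital of `Γ(q,d)` is isomorphic to the generalized Paley graph `P(q,d)`. -/
theorem orbital_iso_paley (q d : ℕ) (hq : IsPrimePow q) (hodd : Odd q)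
    (hdeven : Even d) (hdvd : d ∣ q - 1)
    {F : Type} [Field F] [Fintype F] (hF : Fintype.card F = q)
    (u v : F) (huv : u ≠ v) :
    Nonempty (OrbitalGraph d u v ≃g PaleyGraph (F := F) d) := by
  have hc : u - v ≠ 0 := sub_ne_zero.mpr huv
  refine ⟨⟨Equiv.mulRight₀ (u - v)⁻¹ (inv_ne_zero hc), ?_⟩⟩
  intro x y
  simp only [PaleyGraph, OrbitalGraph, SimpleGraph.fromRel_adj, Equiv.mulRight₀_apply,
    ne_eq, mul_left_inj' (inv_ne_zero hc)]
  rw [← sub_mul, ← sub_mul, exists_iff_aux d u v x y hc, exists_iff_aux d u v y x hc]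
end

section
/- Let p be a prime, α ≥ 1 and k ≥ 1 integers, F = F_{p^α} the field with p^α elements, and Δ a subgroup of the symmetric group on {1,...,k}. Let G be the group of permutations of {1,...,k} × F of the form (x, y) ↦ (σ(x), a·y + b_{σ(x)}) where σ ∈ Δ, a ∈ F^×, and b = (b_1,...,b_k) ∈ F^k. Let m' be the minimum size of an orbit of Δ on {1,...,k}, and (when k ≥ 2) let m'' be the minimum size of an orbit of Δ on 2-element subsets of {1,...,k}. Then: (i) for every 2-element subset {(x, y_1), (x, y_2)} with equal first coordinates (an intra-cluster pair), its orbit under the induced action of G on 2-element subsets has size at least (p^α(p^α − 1)/2)·m'; and (ii) for every 2-element subset {(x_1, y_1), (x_2, y_2)} with x_1 ≠ x_2 (an inter-cluster pair), its orbit has size at least p^{2α}·m''. -/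
/-- The u-orbital (orbit on unordered pairs) of the pair `e` under the group
`Γ₀(p^α, Δ) = (F⁺)^k ⋊ (F^× × Δ)` acting on `Fin k × F` by
`(x, y) ↦ (σ x, a y + b_{σ x})`. -/
def GammaZeroOrbit {k : ℕ} {F : Type} [Field F] (Δ : Subgroup (Equiv.Perm (Fin k)))
    (e : Sym2 (Fin k × F)) : Set (Sym2 (Fin k × F)) :=
  {e' | ∃ σ ∈ Δ, ∃ a : F, a ≠ 0 ∧ ∃ b : Fin k → F,
    Sym2.map (fun zw : Fin k × F => (σ zw.1, a * zw.2 + b (σ zw.1))) e = e'}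

private lemma ncard_prod_aux {A B : Type} (s : Set A) (t : Set B) :
    (s ×ˢ t).ncard = s.ncard * t.ncard := by
  rw [← Nat.card_coe_set_eq, ← Nat.card_coe_set_eq, ← Nat.card_coe_set_eq,
    ← Nat.card_prod]
  exact Nat.card_congr (Equiv.Set.prod s t)

/-- minimum of an unordered pair in `Fin k`. -/
private noncomputable def pmin {k : ℕ} (e : Sym2 (Fin k)) : Fin k :=
  Sym2.lift ⟨fun a b => min a b, fun a b => min_comm a b⟩ e

/-- maximum of an unordered pair in `Fin k`. -/
private noncomputable def pmax {k : ℕ} (e : Sym2 (Fin k)) : Fin k :=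
  Sym2.lift ⟨fun a b => max a b, fun a b => max_comm a b⟩ e

private lemma pmin_pmax {k : ℕ} (e : Sym2 (Fin k)) (he : ¬ e.IsDiag) :
    s(pmin e, pmax e) = e ∧ pmin e < pmax e := by
  induction e using Sym2.ind with
  | _ u v =>
    rw [Sym2.mk_isDiag_iff] at he
    have h1 : pmin s(u, v) = min u v := Sym2.lift_mk _ u v
    have h2 : pmax s(u, v) = max u v := Sym2.lift_mk _ u v
    rw [h1, h2]
    rcases le_total u v with h | h
    · rw [min_eq_left h, max_eq_right h]
      exact ⟨rfl, lt_of_le_of_ne h he⟩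
    · rw [min_eq_right h, max_eq_left h]
      exact ⟨Sym2.eq_swap, lt_of_le_of_ne h (Ne.symm he)⟩

/-- Lower bounds on the sizes of u-orbitals of `Γ₀(p^α, Δ)`: if every orbit of `Δ`
on `Fin k` has size at least `m'` and every orbit of `Δ` on unordered pairs has size
at least `m''`, then every intra-cluster u-orbital has size at least
`(p^α (p^α - 1)/2) · m'` and every inter-cluster u-orbital has size at least
`p^{2α} · m''`. -/
theorem gammaZero_orbital_sizes (p α k : ℕ) (hp : p.Prime) (hα : 1 ≤ α) (hk : 1 ≤ k)
    {F : Type} [Field F] [Fintype F] (hF : Fintype.card F = p ^ α)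
    (Δ : Subgroup (Equiv.Perm (Fin k))) (m' m'' : ℕ)
    (hm' : ∀ x : Fin k, m' ≤ (MulAction.orbit Δ x).ncard)
    (hm'' : ∀ e : Sym2 (Fin k), ¬ e.IsDiag →
      m'' ≤ {e' : Sym2 (Fin k) | ∃ σ ∈ Δ, Sym2.map (σ : Fin k → Fin k) e = e'}.ncard) :
    (∀ x : Fin k, ∀ y₁ y₂ : F, y₁ ≠ y₂ →
      p ^ α * (p ^ α - 1) / 2 * m' ≤
        (GammaZeroOrbit Δ s((x, y₁), (x, y₂))).ncard) ∧
    (∀ x₁ x₂ : Fin k, x₁ ≠ x₂ → ∀ y₁ y₂ : F,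
      p ^ (2 * α) * m'' ≤
        (GammaZeroOrbit Δ s((x₁, y₁), (x₂, y₂))).ncard) := by
  classical
  constructor
  · -- intra-cluster
    intro x y₁ y₂ hy
    set O := GammaZeroOrbit Δ s((x, y₁), (x, y₂)) with hO
    set P : Set (Fin k × Sym2 F) :=
      (MulAction.orbit Δ x) ×ˢ {e : Sym2 F | ¬ e.IsDiag} with hP
    set φ : Fin k × Sym2 F → Sym2 (Fin k × F) :=
      fun q => Sym2.map (fun z => (q.1, z)) q.2 with hφ
    have hsub : ∀ q ∈ P, φ q ∈ O := by
      rintro ⟨x', e⟩ ⟨hx', he⟩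
      simp only [Set.mem_setOf_eq] at he
      induction e using Sym2.ind with
      | _ z₁ z₂ =>
        rw [Sym2.mk_isDiag_iff] at he
        obtain ⟨g, hg⟩ := MulAction.mem_orbit_iff.mp hx'
        have hgx : (g : Equiv.Perm (Fin k)) x = x' := hg
        have hysub : y₁ - y₂ ≠ 0 := sub_ne_zero.mpr hy
        refine ⟨(g : Equiv.Perm (Fin k)), g.2, (z₁ - z₂) / (y₁ - y₂),
          div_ne_zero (sub_ne_zero.mpr he) hysub,
          fun _ => z₁ - (z₁ - z₂) / (y₁ - y₂) * y₁, ?_⟩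
        have hcancel : (z₁ - z₂) / (y₁ - y₂) * (y₁ - y₂) = z₁ - z₂ :=
          div_mul_cancel₀ _ hysub
        rw [Sym2.map_pair_eq]
        simp only [hφ, Sym2.map_pair_eq, hgx]
        apply Sym2.eq_iff.mpr
        left
        constructor
        · refine Prod.ext rfl ?_
          ring
        · refine Prod.ext rfl ?_
          simp only
          linear_combination -hcancel
    have hinj : Set.InjOn φ P := by
      rintro ⟨x', e⟩ _ ⟨x'', e''⟩ _ heq
      induction e using Sym2.ind with
      | _ z₁ z₂ =>
        induction e'' using Sym2.ind with
        | _ w₁ w₂ =>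
          simp only [hφ, Sym2.map_pair_eq] at heq
          rcases Sym2.eq_iff.mp heq with ⟨h1, h2⟩ | ⟨h1, h2⟩ <;>
            simp only [Prod.mk.injEq] at h1 h2
          · obtain ⟨ha1, hb1⟩ := h1
            obtain ⟨ha2, hb2⟩ := h2
            subst ha1 hb1 hb2
            rfl
          · obtain ⟨ha1, hb1⟩ := h1
            obtain ⟨ha2, hb2⟩ := h2
            subst ha1 hb1 hb2
            exact Prod.ext_iff.mpr ⟨rfl, Sym2.eq_swap⟩
    have hcard : P.ncard ≤ O.ncard :=
      Set.ncard_le_ncard_of_injOn φ hsub hinj (Set.toFinite O)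
    refine le_trans ?_ hcard
    rw [hP, ncard_prod_aux]
    have hnd : {e : Sym2 F | ¬ e.IsDiag}.ncard = p ^ α * (p ^ α - 1) / 2 := by
      have h1 : Nat.card {e : Sym2 F // ¬ e.IsDiag} = (Fintype.card F).choose 2 := by
        rw [Nat.card_eq_fintype_card]; exact Sym2.card_subtype_not_diag
      have h2 : Nat.card ↥{e : Sym2 F | ¬ e.IsDiag}
          = Nat.card {e : Sym2 F // ¬ e.IsDiag} :=
        Nat.card_congr (Equiv.subtypeEquivRight fun _ => Iff.rfl)
      rw [← Nat.card_coe_set_eq, h2, h1, hF, Nat.choose_two_right]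
    rw [hnd, mul_comm ((MulAction.orbit Δ x).ncard)]
    exact Nat.mul_le_mul_left _ (hm' x)
  · -- inter-cluster
    intro x₁ x₂ hx y₁ y₂
    set O := GammaZeroOrbit Δ s((x₁, y₁), (x₂, y₂)) with hO
    set S : Set (Sym2 (Fin k)) :=
      {e' | ∃ σ ∈ Δ, Sym2.map (σ : Fin k → Fin k) s(x₁, x₂) = e'} with hS
    have hSnd : ∀ e' ∈ S, ¬ e'.IsDiag := by
      rintro e' ⟨σ, hσ, rfl⟩
      rw [Sym2.map_pair_eq, Sym2.mk_isDiag_iff]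
      exact fun h => hx (σ.injective h)
    set P : Set (Sym2 (Fin k) × (F × F)) := S ×ˢ (Set.univ : Set (F × F)) with hP
    set φ : Sym2 (Fin k) × (F × F) → Sym2 (Fin k × F) :=
      fun q => s((pmin q.1, q.2.1), (pmax q.1, q.2.2)) with hφ
    have hsub : ∀ q ∈ P, φ q ∈ O := by
      rintro ⟨e', z₁, z₂⟩ ⟨he', -⟩
      obtain ⟨σ, hσ, hmape⟩ := he'
      replace hmape : Sym2.map (σ : Fin k → Fin k) s(x₁, x₂) = e' := hmape
      have hnd := hSnd e' ⟨σ, hσ, hmape⟩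
      obtain ⟨hmk, hlt⟩ := pmin_pmax e' hnd
      have hne : σ x₁ ≠ σ x₂ := fun h => hx (σ.injective h)
      rw [Sym2.map_pair_eq] at hmape
      refine ⟨σ, hσ, 1, one_ne_zero,
        fun t => (if t = pmin e' then z₁ else z₂) - (if t = σ x₁ then y₁ else y₂), ?_⟩
      rw [Sym2.map_pair_eq]
      show s((σ x₁, 1 * y₁ + _), (σ x₂, 1 * y₂ + _)) = s((pmin e', z₁), (pmax e', z₂))
      have hcase : (pmin e' = σ x₁ ∧ pmax e' = σ x₂) ∨
          (pmin e' = σ x₂ ∧ pmax e' = σ x₁) := by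
        rcases Sym2.eq_iff.mp (hmk.trans hmape.symm) with ⟨h1, h2⟩ | ⟨h1, h2⟩
        · exact Or.inl ⟨h1, h2⟩
        · exact Or.inr ⟨h1, h2⟩
      rcases hcase with ⟨h1, h2⟩ | ⟨h1, h2⟩
      · rw [← h1, ← h2]
        simp [hlt.ne']
      · rw [← h1, ← h2]
        have g1 : (1 : F) * y₁ +
            ((if pmax e' = pmin e' then z₁ else z₂) -
              (if pmax e' = pmax e' then y₁ else y₂)) = z₂ := by
          rw [if_neg hlt.ne', if_pos rfl]; ring
        have g2 : (1 : F) * y₂ +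
            ((if pmin e' = pmin e' then z₁ else z₂) -
              (if pmin e' = pmax e' then y₁ else y₂)) = z₁ := by
          rw [if_pos rfl, if_neg hlt.ne]; ring
        rw [g1, g2]
        exact Sym2.eq_swap
    have hinj : Set.InjOn φ P := by
      rintro ⟨e', z₁, z₂⟩ ⟨he', -⟩ ⟨e'', w₁, w₂⟩ ⟨he'', -⟩ heq
      obtain ⟨hmk', hlt'⟩ := pmin_pmax e' (hSnd e' he')
      obtain ⟨hmk'', hlt''⟩ := pmin_pmax e'' (hSnd e'' he'')
      simp only [hφ] at heq
      rcases Sym2.eq_iff.mp heq with ⟨h1, h2⟩ | ⟨h1, h2⟩ <;>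
        simp only [Prod.mk.injEq] at h1 h2
      · obtain ⟨ha1, hb1⟩ := h1
        obtain ⟨ha2, hb2⟩ := h2
        have he : e' = e'' := by rw [← hmk', ← hmk'', ha1, ha2]
        subst hb1 hb2 he
        rfl
      · obtain ⟨ha1, -⟩ := h1
        obtain ⟨ha2, -⟩ := h2
        exfalso
        rw [ha1, ha2] at hlt'
        exact lt_asymm hlt' hlt''
    have hcard : P.ncard ≤ O.ncard :=
      Set.ncard_le_ncard_of_injOn φ hsub hinj (Set.toFinite O)
    refine le_trans ?_ hcard
    rw [hP, ncard_prod_aux]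
    have huniv : (Set.univ : Set (F × F)).ncard = p ^ (2 * α) := by
      rw [Set.ncard_univ, Nat.card_eq_fintype_card, Fintype.card_prod, hF, two_mul,
        pow_add]
    rw [huniv, mul_comm S.ncard]
    have hSnd2 : ¬ (s(x₁, x₂) : Sym2 (Fin k)).IsDiag := by
      rw [Sym2.mk_isDiag_iff]; exact hx
    exact Nat.mul_le_mul_left _ (hm'' s(x₁, x₂) hSnd2)
end
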